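/- arXiv:1203.4919 — 2 statements merged into one kernel-verified Lean document; each statement's English description precedes it below -/
import Mathlib

section
/- For coprime integers a > b ≥ 1, every positive integer n has a representation n = (1/b) ∑_{k=0}^{ℓ-1} ε_k (a/b)^k with digits ε_k ∈ {0,1,…,a-1} and ε_{ℓ-1} ≠ 0, and this representation is unique. -/
def fval (a b : ℕ) (L : List ℕ) : ℕ :=
  ∑ k ∈ Finset.range L.length, L.getD k 0 * a ^ k * b ^ (L.length - 1 - k)

lemma fval_nil (a b : ℕ) : fval a b [] = 0 := rfl

lemma fval_cons (a b d : ℕ) (L : List ℕ) :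
    fval a b (d :: L) = d * b ^ L.length + a * fval a b L := by
  unfold fval
  rw [List.length_cons, Finset.sum_range_succ', Finset.mul_sum]
  simp only [List.getD_cons_succ, List.getD_cons_zero]
  rw [add_comm]
  congr 1
  · simp
  · apply Finset.sum_congr rfl
    intro k hk
    have h1 : L.length + 1 - 1 - (k + 1) = L.length - 1 - k := by omega
    rw [h1, pow_succ]
    ring

lemma fval_pos (a b : ℕ) (ha : 0 < a) (hb : 0 < b) (L : List ℕ) (hL : L ≠ [])
    (h0 : L.getLast? ≠ some 0) : 0 < fval a b L := by
  have hlen : 0 < L.length := List.length_pos_iff.mpr hL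
  have hlast : L.getLast? = some (L.getD (L.length - 1) 0) := by
    rw [List.getLast?_eq_getElem?, List.getD_eq_getElem?_getD]
    rw [List.getElem?_eq_getElem (by omega)]
    simp
  have hne : L.getD (L.length - 1) 0 ≠ 0 := by
    intro h; rw [h] at hlast; exact h0 hlast
  have hmem : L.length - 1 ∈ Finset.range L.length := by
    simp; omega
  have := Finset.single_le_sum (f := fun k => L.getD k 0 * a ^ k * b ^ (L.length - 1 - k))
    (fun k _ => Nat.zero_le _) hmem
  have hpos : 0 < L.getD (L.length - 1) 0 * a ^ (L.length - 1) * b ^ (L.length - 1 - (L.length - 1)) := by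
    positivity
  exact lt_of_lt_of_le hpos this

lemma getLast?_cons_ne (d : ℕ) (K : List ℕ) (h : K ≠ []) :
    (d :: K).getLast? = K.getLast? := by
  rcases K with _ | ⟨x, K⟩
  · simp at h
  · simp [List.getLast?_cons_cons]

lemma key (a b : ℕ) (hb : 1 ≤ b) (hab : b < a) (hcop : Nat.Coprime a b) :
    ∀ n : ℕ, ∃! L : List ℕ,
      (∀ d ∈ L, d < a) ∧ L.getLast? ≠ some 0 ∧ fval a b L = n * b ^ L.length := by
  intro n
  induction n using Nat.strong_induction_on with
  | _ n ih =>
  have ha : 0 < a := by omega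
  rcases Nat.eq_zero_or_pos n with rfl | hn
  · refine ⟨[], ⟨by simp, by simp, by simp [fval_nil]⟩, ?_⟩
    rintro L ⟨h1, h2, h3⟩
    by_contra hL
    have := fval_pos a b ha hb L hL h2
    simp at h3
    omega
  · set d := (n * b) % a with hd
    set m := (n * b) / a with hm
    have hdm : a * m + d = n * b := Nat.div_add_mod (n * b) a
    have hmn : m < n := by
      have h1 : n * b < a * n := by nlinarith
      have := Nat.div_lt_of_lt_mul h1
      omega
    obtain ⟨M, ⟨hM1, hM2, hM3⟩, hMu⟩ := ih m hmn
    have hda : d < a := Nat.mod_lt _ ha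
    -- the candidate
    have hcand : (∀ x ∈ d :: M, x < a) ∧ (d :: M).getLast? ≠ some 0 ∧
        fval a b (d :: M) = n * b ^ (d :: M).length := by
      refine ⟨?_, ?_, ?_⟩
      · intro x hx
        rcases List.mem_cons.mp hx with rfl | hx
        · exact hda
        · exact hM1 x hx
      · rcases eq_or_ne M [] with rfl | hMne
        · have hm0 : m = 0 := by simpa [fval_nil] using hM3.symm
          have hd0 : d ≠ 0 := by
            intro h
            rw [h, hm0] at hdm
            have : 0 < n * b := Nat.mul_pos hn hb
            omega
          simp [List.getLast?]
          exact hd0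
        · rw [getLast?_cons_ne d M hMne]
          exact hM2
      · have hr : d * b ^ M.length + a * (m * b ^ M.length)
            = (a * m + d) * b ^ M.length := by ring
        rw [fval_cons, hM3, List.length_cons, pow_succ, hr, hdm]
        ring
    refine ⟨d :: M, hcand, ?_⟩
    rintro L ⟨h1, h2, h3⟩
    have hLne : L ≠ [] := by
      rintro rfl
      simp [fval_nil] at h3
      omega
    obtain ⟨e, K, rfl⟩ := List.exists_cons_of_ne_nil hLne
    rw [fval_cons, List.length_cons, pow_succ] at h3
    have hcb : Nat.Coprime (b ^ K.length) a := hcop.symm.pow_left _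
    have hmod : e ≡ n * b [MOD a] := by
      have h4 : e * b ^ K.length ≡ n * b * b ^ K.length [MOD a] := by
        have h5 : e * b ^ K.length % a = (e * b ^ K.length + a * fval a b K) % a := by
          simp [Nat.add_mul_mod_self_left]
        unfold Nat.ModEq
        rw [h5, h3]
        ring_nf
      exact h4.cancel_right_of_coprime hcb.symm
    have he : e = d := by
      have h6 : e % a = (n * b) % a := hmod
      rw [Nat.mod_eq_of_lt (h1 e (by simp))] at h6
      omega
    subst he
    have hK : fval a b K = m * b ^ K.length := by
      have h5 : d * b ^ K.length + a * fval a b K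
          = d * b ^ K.length + a * (m * b ^ K.length) := by
        rw [h3, show n * (b ^ K.length * b) = (n * b) * b ^ K.length from by ring,
          ← hdm]; ring
      have h6 : a * fval a b K = a * (m * b ^ K.length) := by omega
      exact Nat.eq_of_mul_eq_mul_left ha h6
    have hKlast : K.getLast? ≠ some 0 := by
      rcases eq_or_ne K [] with rfl | hKne
      · simp
      · rw [getLast?_cons_ne d K hKne] at h2
        exact h2
    have hKM : K = M := hMu K ⟨fun x hx => h1 x (by simp [hx]), hKlast, hK⟩
    rw [hKM]

lemma rat_eq_iff (a b n : ℕ) (hb : 1 ≤ b) (L : List ℕ) (hL : L ≠ []) :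
    ((∑ k ∈ Finset.range L.length, (L.getD k 0 : ℚ) * ((a : ℚ) / b) ^ k) / b = n)
    ↔ fval a b L = n * b ^ L.length := by
  have hbQ : (b : ℚ) ≠ 0 := Nat.cast_ne_zero.mpr (by omega)
  obtain ⟨ℓ, hℓ⟩ : ∃ ℓ, L.length = ℓ + 1 :=
    ⟨L.length - 1, by have := List.length_pos_iff.mpr hL; omega⟩
  have hfq : (fval a b L : ℚ)
      = (∑ k ∈ Finset.range L.length, (L.getD k 0 : ℚ) * ((a : ℚ) / b) ^ k) * b ^ ℓ := by
    unfold fval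
    push_cast
    rw [Finset.sum_mul]
    apply Finset.sum_congr rfl
    intro k hk
    have hk' : k ≤ ℓ := by
      rw [Finset.mem_range, hℓ] at hk; omega
    have hbb : (b : ℚ) ^ (L.length - 1 - k) = b ^ ℓ / b ^ k := by
      rw [eq_div_iff (pow_ne_zero _ hbQ), ← pow_add, hℓ]
      congr 1
      omega
    rw [hbb, div_pow]
    field_simp
  rw [div_eq_iff hbQ]
  constructor
  · intro h
    have hc : (fval a b L : ℚ) = ((n * b ^ L.length : ℕ) : ℚ) := by
      push_cast
      rw [hfq, h, hℓ]; ring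
    exact_mod_cast hc
  · intro h
    have hbp : ((b : ℚ)) ^ ℓ ≠ 0 := pow_ne_zero _ hbQ
    have h2 : (∑ k ∈ Finset.range L.length, (L.getD k 0 : ℚ) * ((a : ℚ) / b) ^ k) * b ^ ℓ
        = (n : ℚ) * b * b ^ ℓ := by
      rw [← hfq, h]
      push_cast [hℓ]
      ring
    exact mul_right_cancel₀ hbp h2

/-- `L` is the list of digits (least significant first) of the base-`a/b`
representation of `n`: all digits are `< a`, the leading digit is nonzero, and
`n = (1/b) * ∑_k L_k * (a/b)^k`. -/
def IsRep (a b n : ℕ) (L : List ℕ) : Prop :=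
  (∀ d ∈ L, d < a) ∧ L ≠ [] ∧ L.getLast? ≠ some 0 ∧
    (∑ k ∈ Finset.range L.length, (L.getD k 0 : ℚ) * ((a : ℚ) / b) ^ k) / b = n

theorem exists_unique_rational_base_representation
    (a b : ℕ) (hb : 1 ≤ b) (hab : b < a) (hcop : Nat.Coprime a b)
    (n : ℕ) (hn : 0 < n) :
    ∃! L : List ℕ, IsRep a b n L := by
  obtain ⟨L, ⟨hL1, hL2, hL3⟩, hLu⟩ := key a b hb hab hcop n
  have hLne : L ≠ [] := by
    rintro rfl
    simp [fval_nil] at hL3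
    omega
  refine ⟨L, ⟨hL1, hLne, hL2, (rat_eq_iff a b n hb L hLne).mpr hL3⟩, ?_⟩
  rintro M ⟨hM1, hMne, hM2, hM3⟩
  exact hLu M ⟨hM1, hM2, (rat_eq_iff a b n hb M hMne).mp hM3⟩
end

section
/- Suppose that for every finite digit string w over {0,…,a−1} the counting function S_w(N) of occurrences of w in the base-a/b representations of 1,…,N satisfies S_w(N) = N a^{−|w|} log_{a/b} N + O(N log log N). Then the real number 𝔷_{a/b} ∈ (0,1), whose base-a expansion is the concatenation of the base-a/b representations of 1, 2, 3, …, is normal in base a. -/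
open Filter Finset Real Asymptotics Topology

section Patterns

variable {r : ℕ}

def patternCount (l : List ℕ) (w : Fin r → ℕ) : ℕ :=
  #{k ∈ range l.length | k + r ≤ l.length ∧ ∀ i : Fin r, l.getD (k + i) 0 = w i}

def seqPatternCount (z : ℕ → ℕ) (w : Fin r → ℕ) (x : ℕ) : ℕ :=
  #{n ∈ Icc 1 x | ∀ i : Fin r, z (n + i) = w i}

def blockStart (rep : ℕ → List ℕ) (n : ℕ) : ℕ :=
  ∑ j ∈ Ico 1 n, (rep j).length

theorem length_eq_sum_patternCount {a : ℕ} {l : List ℕ} (hl : ∀ d ∈ l, d < a) :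
    l.length = ∑ d ∈ range a, patternCount l (fun _ : Fin 1 => d) := by
  have hdig : ∀ k ∈ range l.length, l.getD k 0 ∈ range a := fun k hk => by
    rw [mem_range] at hk ⊢
    exact hl _ (l.getD_eq_getElem 0 hk ▸ l.getElem_mem hk)
  rw [← card_range l.length, card_eq_sum_card_fiberwise hdig]
  refine sum_congr rfl fun d _ => congrArg card (filter_congr fun k hk => ?_)
  simp only [mem_range] at hk
  simp only [List.getD_eq_getElem?_getD, Order.add_one_le_iff, Fin.val_eq_zero, add_zero,
    forall_const, iff_and_self]
  omega

theorem seqPatternCount_mono (z : ℕ → ℕ) (w : Fin r → ℕ) : Monotone (seqPatternCount z w) :=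
  fun _ _ hxy => card_le_card (filter_subset_filter _ (Icc_subset_Icc le_rfl hxy))

theorem blockStart_mono (rep : ℕ → List ℕ) : Monotone (blockStart rep) :=
  fun _ _ hmn => sum_le_sum_of_subset (Ico_subset_Ico le_rfl hmn)

theorem blockStart_succ (rep : ℕ → List ℕ) {m : ℕ} (hm : 1 ≤ m) :
    blockStart rep (m + 1) = blockStart rep m + (rep m).length :=
  sum_Ico_succ_top hm _

theorem le_blockStart_succ {rep : ℕ → List ℕ} (hrep : ∀ n, 0 < n → rep n ≠ []) (N : ℕ) :
    N ≤ blockStart rep (N + 1) := by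
  simpa [blockStart] using card_nsmul_le_sum (Ico 1 (N + 1)) (fun j => (rep j).length) 1
    fun j hj => List.length_pos_iff.2 (hrep j (mem_Ico.1 hj).1)

theorem card_filter_Ioc_eq_sum (P : ℕ → Prop) [DecidablePred P] {O : ℕ → ℕ} (hO : Monotone O)
    {k N : ℕ} (hkN : k ≤ N) :
    #{n ∈ Ioc (O k) (O N) | P n} = ∑ m ∈ Ico k N, #{n ∈ Ioc (O m) (O (m + 1)) | P n} := by
  induction N, hkN using Nat.le_induction with
  | base => simp
  | succ N hkN ih =>
    rw [sum_Ico_succ_top hkN, ← ih, card_filter, card_filter, card_filter,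
      sum_Ioc_consecutive _ (hO hkN) (hO N.le_succ)]

theorem card_filter_Ioc_le_card_filter_add (P : ℕ → Prop) [DecidablePred P] (s e r : ℕ) :
    #{n ∈ Ioc s e | P n} ≤ #{n ∈ Ioc s e | n + r ≤ e + 1 ∧ P n} + r :=
  calc #{n ∈ Ioc s e | P n}
      ≤ #({n ∈ Ioc s e | n + r ≤ e + 1 ∧ P n} ∪ Ioc (e + 1 - r) e) :=
        card_le_card fun n hn => by
          simp only [mem_union, mem_filter, mem_Ioc] at hn ⊢
          by_cases h : n + r ≤ e + 1
          · exact Or.inl ⟨hn.1, h, hn.2⟩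
          · exact Or.inr (by omega)
    _ ≤ #{n ∈ Ioc s e | n + r ≤ e + 1 ∧ P n} + #(Ioc (e + 1 - r) e) := card_union_le _ _
    _ ≤ _ := by rw [Nat.card_Ioc]; omega

section Block

variable {l : List ℕ} {s : ℕ} {z : ℕ → ℕ}

theorem card_block_occurrences_eq_patternCount_rev
    (hz : ∀ k, 1 ≤ k → k ≤ l.length → z (k + s) = l.getD (l.length - k) 0)
    (hr : 1 ≤ r) (w : Fin r → ℕ) :
    #{n ∈ Ioc s (s + l.length) | n + r ≤ s + l.length + 1 ∧ ∀ i : Fin r, z (n + i) = w i} =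
      patternCount l (fun i => w i.rev) := by
  set L := l.length
  -- `z` reads `l` backwards, so a match of `w` at position `n` is a match of `w ∘ Fin.rev` in `l`
  -- at index `s + L + 1 - r - n`.
  have key : ∀ n, s < n → n + r ≤ s + L + 1 → ∀ i : Fin r,
      z (n + i) = l.getD (s + L + 1 - r - n + i.rev) 0 := fun n hsn hnr i => by
    have hi := i.isLt
    rw [Fin.val_rev, show n + i = (n - s + i) + s by omega, hz _ (by omega) (by omega)]
    congr 1
    omega
  symm
  refine card_nbij' (fun k => s + L + 1 - r - k) (fun n => s + L + 1 - r - n) ?_ ?_ ?_ ?_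
  · intro k hk
    simp only [coe_filter, mem_range, Set.mem_ofPred_eq, mem_Ioc] at hk ⊢
    refine ⟨⟨by omega, by omega⟩, by omega, fun i => ?_⟩
    rw [key _ (by omega) (by omega), show s + L + 1 - r - (s + L + 1 - r - k) = k by omega,
      hk.2.2, Fin.rev_rev]
  · intro n hn
    simp only [coe_filter, mem_range, Set.mem_ofPred_eq, mem_Ioc] at hn ⊢
    refine ⟨by omega, by omega, fun i => ?_⟩
    rw [← hn.2.2 i.rev, key _ hn.1.1 hn.2.1, Fin.rev_rev]
  · intro k hk
    simp only [coe_filter, mem_range, Set.mem_ofPred_eq] at hk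
    dsimp only
    omega
  · intro n hn
    simp only [coe_filter, mem_Ioc, Set.mem_ofPred_eq] at hn
    dsimp only
    omega

theorem patternCount_rev_le_card_block
    (hz : ∀ k, 1 ≤ k → k ≤ l.length → z (k + s) = l.getD (l.length - k) 0)
    (hr : 1 ≤ r) (w : Fin r → ℕ) :
    patternCount l (fun i => w i.rev) ≤
      #{n ∈ Ioc s (s + l.length) | ∀ i : Fin r, z (n + i) = w i} := by
  rw [← card_block_occurrences_eq_patternCount_rev hz hr w]
  exact card_le_card (monotone_filter_right _ fun _ _ h => h.2)

theorem card_block_le_patternCount_rev_add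
    (hz : ∀ k, 1 ≤ k → k ≤ l.length → z (k + s) = l.getD (l.length - k) 0)
    (hr : 1 ≤ r) (w : Fin r → ℕ) :
    #{n ∈ Ioc s (s + l.length) | ∀ i : Fin r, z (n + i) = w i} ≤
      patternCount l (fun i => w i.rev) + r := by
  rw [← card_block_occurrences_eq_patternCount_rev hz hr w]
  exact card_filter_Ioc_le_card_filter_add _ _ _ _

end Block

section Concatenation

variable {rep : ℕ → List ℕ} {z : ℕ → ℕ}

theorem seqPatternCount_blockStart (w : Fin r → ℕ) (N : ℕ) :
    seqPatternCount z w (blockStart rep (N + 1)) = ∑ m ∈ Icc 1 N,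
      #{n ∈ Ioc (blockStart rep m) (blockStart rep (m + 1)) | ∀ i : Fin r, z (n + i) = w i} := by
  rw [← Ico_add_one_right_eq_Icc, ← card_filter_Ioc_eq_sum _ (blockStart_mono rep) (by omega)]
  rfl

theorem sum_patternCount_le_seqPatternCount
    (hz : ∀ n, 0 < n → ∀ k, 1 ≤ k → k ≤ (rep n).length →
      z (k + blockStart rep n) = (rep n).getD ((rep n).length - k) 0)
    (hr : 1 ≤ r) (w : Fin r → ℕ) {N x : ℕ}
    (hx : blockStart rep (N + 1) ≤ x) :
    ∑ m ∈ Icc 1 N, patternCount (rep m) (fun i => w i.rev) ≤ seqPatternCount z w x :=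
  calc ∑ m ∈ Icc 1 N, patternCount (rep m) (fun i => w i.rev)
      ≤ ∑ m ∈ Icc 1 N,
          #{n ∈ Ioc (blockStart rep m) (blockStart rep (m + 1)) | ∀ i : Fin r, z (n + i) = w i} :=
        sum_le_sum fun m hm => by
          rw [blockStart_succ rep (mem_Icc.1 hm).1]
          exact patternCount_rev_le_card_block (hz m (mem_Icc.1 hm).1) hr w
    _ = seqPatternCount z w (blockStart rep (N + 1)) := (seqPatternCount_blockStart w N).symm
    _ ≤ seqPatternCount z w x := seqPatternCount_mono z w hx

theorem seqPatternCount_le_sum_patternCount_add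
    (hz : ∀ n, 0 < n → ∀ k, 1 ≤ k → k ≤ (rep n).length →
      z (k + blockStart rep n) = (rep n).getD ((rep n).length - k) 0)
    (hr : 1 ≤ r) (w : Fin r → ℕ) {N x : ℕ}
    (hx : x ≤ blockStart rep (N + 1)) :
    seqPatternCount z w x ≤ ∑ m ∈ Icc 1 N, patternCount (rep m) (fun i => w i.rev) + r * N :=
  calc seqPatternCount z w x
      ≤ seqPatternCount z w (blockStart rep (N + 1)) := seqPatternCount_mono z w hx
    _ = ∑ m ∈ Icc 1 N,
          #{n ∈ Ioc (blockStart rep m) (blockStart rep (m + 1)) | ∀ i : Fin r, z (n + i) = w i} :=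
        seqPatternCount_blockStart w N
    _ ≤ ∑ m ∈ Icc 1 N, (patternCount (rep m) (fun i => w i.rev) + r) :=
        sum_le_sum fun m hm => by
          rw [blockStart_succ rep (mem_Icc.1 hm).1]
          exact card_block_le_patternCount_rev_add (hz m (mem_Icc.1 hm).1) hr w
    _ = ∑ m ∈ Icc 1 N, patternCount (rep m) (fun i => w i.rev) + r * N := by
        rw [sum_add_distrib, sum_const, Nat.card_Icc, smul_eq_mul, Nat.add_sub_cancel, mul_comm]

end Concatenation

end Patterns

theorem isBigO_of_abs_le_mul {α : Type*} {l : Filter α} {f g : α → ℝ} {C : ℝ}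
    (h : ∀ᶠ x in l, |f x| ≤ C * g x) : f =O[l] g :=
  IsBigO.of_bound |C| <| h.mono fun x hx => by
    rw [Real.norm_eq_abs, Real.norm_eq_abs, ← abs_mul]
    exact hx.trans (le_abs_self _)

theorem exists_bracket_index {T : ℕ → ℕ} (hT_ge : ∀ N, N ≤ T N) (hT0 : T 0 = 0) :
    ∃ ν : ℕ → ℕ, (∀ x, T (ν x) ≤ x ∧ x < T (ν x + 1)) ∧ Tendsto ν atTop atTop := by
  classical
  refine ⟨fun x => Nat.findGreatest (fun N => T N ≤ x) x, fun x => ⟨?_, ?_⟩, ?_⟩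
  · exact Nat.findGreatest_spec (P := fun N => T N ≤ x) (Nat.zero_le x) (by simp [hT0])
  · by_contra! h
    exact Nat.findGreatest_is_greatest (Nat.lt_succ_self _) ((hT_ge _).trans h) h
  · exact tendsto_atTop_atTop.2 fun M =>
      ⟨M + T M, fun x hx => Nat.le_findGreatest (by omega) (by omega)⟩

theorem tendsto_div_of_bracket {S T F : ℕ → ℕ} {φ : ℕ → ℝ} {c : ℝ} (r : ℕ)
    (hS : Tendsto (fun N => (S N : ℝ) / φ N) atTop (𝓝 c))
    (hT : Tendsto (fun N => (T N : ℝ) / φ N) atTop (𝓝 1))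
    (hφ : Tendsto (fun N => φ (N + 1) / φ N) atTop (𝓝 1))
    (hNφ : Tendsto (fun N : ℕ => (N : ℝ) / φ N) atTop (𝓝 0))
    (hT_ge : ∀ N, N ≤ T N) (hT0 : T 0 = 0)
    (hlow : ∀ N x, T N ≤ x → S N ≤ F x)
    (hup : ∀ N x, x < T (N + 1) → F x ≤ S (N + 1) + r * (N + 1)) :
    Tendsto (fun x => (F x : ℝ) / x) atTop (𝓝 c) := by
  obtain ⟨ν, hν, hν_top⟩ := exists_bracket_index hT_ge hT0
  have hφ0 : ∀ᶠ N in atTop, φ N ≠ 0 :=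
    (hT.eventually_ne one_ne_zero).mono fun N h hφN => h (by rw [hφN, div_zero])
  have hφ1 : ∀ᶠ N in atTop, φ (N + 1) ≠ 0 := (tendsto_add_atTop_nat 1).eventually hφ0
  have hT_pos : ∀ N, 1 ≤ N → (0 : ℝ) < T N := fun N hN => by
    have := hT_ge N
    exact_mod_cast (show 0 < T N by omega)
  have hlower : Tendsto (fun N => (S N : ℝ) / T (N + 1)) atTop (𝓝 c) := by
    have := hS.div ((hT.comp (tendsto_add_atTop_nat 1)).mul hφ) (by norm_num)
    rw [mul_one, div_one] at this
    refine this.congr' ?_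
    filter_upwards [hφ0, hφ1] with N h0 h1
    have := (hT_pos (N + 1) (by omega)).ne'
    simp only [Pi.div_apply, Function.comp_apply]
    field_simp
  have hupper : Tendsto (fun N => ((S (N + 1) + r * (N + 1) : ℕ) : ℝ) / T N) atTop (𝓝 c) := by
    have := ((((hS.comp (tendsto_add_atTop_nat 1)).add
      ((hNφ.comp (tendsto_add_atTop_nat 1)).const_mul (r : ℝ))).mul hφ).div hT one_ne_zero)
    rw [mul_zero, add_zero, mul_one, div_one] at this
    refine this.congr' ?_
    filter_upwards [hφ0, hφ1, eventually_ge_atTop 1] with N h0 h1 hN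
    have := (hT_pos N hN).ne'
    simp only [Pi.div_apply, Function.comp_apply]
    push_cast
    field_simp
  refine tendsto_of_tendsto_of_tendsto_of_le_of_le' (hlower.comp hν_top) (hupper.comp hν_top) ?_ ?_
  · filter_upwards [eventually_gt_atTop 0] with x hx
    have hx' : (0 : ℝ) < x := by exact_mod_cast hx
    calc (S (ν x) : ℝ) / T (ν x + 1) ≤ S (ν x) / x := by
          gcongr
          exact_mod_cast (hν x).2.le
      _ ≤ F x / x := by
          gcongr
          exact_mod_cast hlow _ _ (hν x).1
  · filter_upwards [hν_top.eventually (eventually_ge_atTop 1)] with x hx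
    calc (F x : ℝ) / x ≤ ((S (ν x + 1) + r * (ν x + 1) : ℕ) : ℝ) / x := by
          gcongr
          exact_mod_cast hup _ _ (hν x).2
      _ ≤ _ / T (ν x) := by
          gcongr
          · exact hT_pos _ hx
          · exact_mod_cast (hν x).1

section MulLogb

variable {q : ℝ}

theorem eventually_mul_logb_pos (hq : 1 < q) : ∀ᶠ N : ℕ in atTop, 0 < (N : ℝ) * logb q N := by
  filter_upwards [eventually_ge_atTop 2] with N hN
  have hN' : (1 : ℝ) < N := by exact_mod_cast hN
  exact mul_pos (by linarith) (logb_pos hq hN')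

theorem isLittleO_mul_log_log_mul_logb (hq : 1 < q) :
    (fun N : ℕ => (N : ℝ) * log (log N)) =o[atTop] fun N : ℕ => (N : ℝ) * logb q N := by
  have hlog : (fun N : ℕ => log (log N)) =o[atTop] fun N : ℕ => log N :=
    (isLittleO_log_id_atTop.comp_tendsto tendsto_log_atTop).comp_tendsto
      tendsto_natCast_atTop_atTop
  refine (isBigO_refl _ _).mul_isLittleO ?_
  refine ((hlog.const_mul_right (inv_ne_zero (log_pos hq).ne')).congr_right fun N => ?_)
  rw [logb, div_eq_inv_mul]

theorem tendsto_div_mul_logb_of_isBigO (hq : 1 < q) {f : ℕ → ℝ} {c : ℝ}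
    (hf : (fun N => f N - c * ((N : ℝ) * logb q N)) =O[atTop] fun N : ℕ => (N : ℝ) * log (log N)) :
    Tendsto (fun N => f N / ((N : ℝ) * logb q N)) atTop (𝓝 c) := by
  have := (hf.trans_isLittleO (isLittleO_mul_log_log_mul_logb hq)).tendsto_div_nhds_zero.add_const c
  rw [zero_add] at this
  refine this.congr' ?_
  filter_upwards [eventually_mul_logb_pos hq] with N hN
  rw [sub_div, mul_div_assoc, div_self hN.ne', mul_one, sub_add_cancel]

theorem tendsto_mul_logb_succ_div (hq : 1 < q) :
    Tendsto (fun N : ℕ => ((N + 1 : ℕ) : ℝ) * logb q (N + 1 : ℕ) / ((N : ℝ) * logb q N))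
      atTop (𝓝 1) := by
  have hlin : Tendsto (fun N : ℕ => 1 + 1 / (N : ℝ)) atTop (𝓝 1) := by
    simpa using (tendsto_one_div_atTop_nhds_zero_nat (𝕜 := ℝ)).const_add 1
  have hlog : Tendsto (fun N : ℕ => 1 + (log (N + 1) - log N) * (log N)⁻¹) atTop (𝓝 1) := by
    simpa using (tendsto_log_nat_add_one_sub_log.mul
      (tendsto_log_atTop.comp tendsto_natCast_atTop_atTop).inv_tendsto_atTop).const_add 1
  have := hlin.mul hlog
  rw [mul_one] at this
  refine this.congr' ?_
  filter_upwards [eventually_ge_atTop 2] with N hN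
  have hN' : (1 : ℝ) < N := by exact_mod_cast hN
  have := (log_pos hN').ne'
  have := (log_pos hq).ne'
  push_cast
  simp only [logb]
  field_simp
  ring

theorem tendsto_natCast_div_mul_logb (hq : 1 < q) :
    Tendsto (fun N : ℕ => (N : ℝ) / ((N : ℝ) * logb q N)) atTop (𝓝 0) := by
  refine ((tendsto_logb_atTop hq).comp tendsto_natCast_atTop_atTop).inv_tendsto_atTop.congr' ?_
  filter_upwards [eventually_gt_atTop 0] with N hN
  have : (N : ℝ) ≠ 0 := by exact_mod_cast hN.ne'
  simp only [Pi.inv_apply, Function.comp_apply]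
  field_simp

end MulLogb

theorem isBigO_blockStart_sub {a : ℕ} {rep : ℕ → List ℕ}
    (hdig : ∀ n, 0 < n → ∀ d ∈ rep n, d < a) {φ g : ℕ → ℝ} {c : ℝ}
    (h : ∀ d < a, (fun N => ((∑ n ∈ Icc 1 N, patternCount (rep n) (fun _ : Fin 1 => d) : ℕ) : ℝ)
      - c * φ N) =O[atTop] g) :
    (fun N => (blockStart rep (N + 1) : ℝ) - a * c * φ N) =O[atTop] g := by
  refine (IsBigO.fun_sum fun d hd => h d (mem_range.1 hd)).congr_left fun N => ?_
  rw [sum_sub_distrib, sum_const, card_range, nsmul_eq_mul, mul_assoc, blockStart,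
    Ico_add_one_right_eq_Icc, ← Nat.cast_sum, sum_comm,
    sum_congr rfl fun n hn => (length_eq_sum_patternCount (hdig n (mem_Icc.1 hn).1)).symm]

theorem champernowne_rational_base_normal_general
    (a b : ℕ) (hb : 1 ≤ b) (hab : b < a)
    (rep : ℕ → List ℕ) (hrep : ∀ n : ℕ, 0 < n → IsRep a b n (rep n))
    (z : ℕ → ℕ)
    (hz : ∀ n : ℕ, 0 < n → ∀ k : ℕ, 1 ≤ k → k ≤ (rep n).length →
      z (k + ∑ j ∈ Finset.Ico 1 n, (rep j).length) = (rep n).getD ((rep n).length - k) 0)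
    (hS : ∀ r : ℕ, 1 ≤ r → ∀ w : Fin r → ℕ, (∀ i, w i < a) →
      ∃ C : ℝ, ∀ N : ℕ, 3 ≤ N →
        |((∑ n ∈ Finset.Icc 1 N, ((Finset.range (rep n).length).filter
              (fun k => k + r ≤ (rep n).length ∧
                ∀ i : Fin r, (rep n).getD (k + (i : ℕ)) 0 = w i)).card : ℕ) : ℝ) -
            (N : ℝ) / (a : ℝ) ^ r * Real.logb ((a : ℝ) / b) N| ≤
          C * N * Real.log (Real.log N)) :
    ∀ r : ℕ, 1 ≤ r → ∀ w : Fin r → ℕ, (∀ i, w i < a) →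
      Filter.Tendsto (fun x : ℕ =>
          (((Finset.Icc 1 x).filter
              (fun n => ∀ i : Fin r, z (n + (i : ℕ)) = w i)).card : ℝ) / x)
        Filter.atTop (nhds (1 / (a : ℝ) ^ r)) := by
  intro r hr w hw
  have hq : 1 < (a : ℝ) / b := (one_lt_div (by positivity)).2 (by exact_mod_cast hab)
  have herr : ∀ r, 1 ≤ r → ∀ w : Fin r → ℕ, (∀ i, w i < a) →
      (fun N : ℕ => ((∑ n ∈ Icc 1 N, patternCount (rep n) w : ℕ) : ℝ) -
        1 / (a : ℝ) ^ r * ((N : ℝ) * logb (a / b) N)) =O[atTop]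
      fun N : ℕ => (N : ℝ) * log (log N) := fun r hr w hw => by
    obtain ⟨C, hC⟩ := hS r hr w hw
    refine isBigO_of_abs_le_mul (C := C) (eventually_atTop.2 ⟨3, fun N hN => ?_⟩)
    rw [← mul_assoc, one_div_mul_eq_div, div_mul_eq_mul_div, mul_div_right_comm]
    exact (hC N hN).trans_eq (mul_assoc _ _ _)
  have hlen := isBigO_blockStart_sub (fun n hn => (hrep n hn).1) fun d hd =>
    herr 1 le_rfl (fun _ => d) fun _ => hd
  have ha : (a : ℝ) ≠ 0 := by exact_mod_cast (by omega : a ≠ 0)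
  rw [pow_one, mul_one_div_cancel ha] at hlen
  exact tendsto_div_of_bracket (F := seqPatternCount z w) r
    (tendsto_div_mul_logb_of_isBigO hq (herr r hr _ fun i => hw i.rev))
    (tendsto_div_mul_logb_of_isBigO hq hlen)
    (tendsto_mul_logb_succ_div hq) (tendsto_natCast_div_mul_logb hq)
    (le_blockStart_succ fun n hn => (hrep n hn).2.1) rfl
    (fun _ _ hx => sum_patternCount_le_seqPatternCount hz hr w hx)
    (fun _ _ hx => seqPatternCount_le_sum_patternCount_add hz hr w hx.le)

/-- The generalized Champernowne number `𝔷_{a/b}`, whose base-`a` digit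
sequence `z` is the concatenation of the base-`a/b` representations of
`1, 2, 3, …`, is normal in base `a`: every digit string `w` of length `r`
over `{0,…,a-1}` occurs in `z` with asymptotic frequency `a^{-r}`. This is
deduced from the pattern-counting theorem
`S_w(N) = N a^{-|w|} log_{a/b} N + O(N log log N)`. -/
theorem champernowne_rational_base_normal
    (a b : ℕ) (hb : 1 ≤ b) (hab : b < a) (hcop : Nat.Coprime a b)
    (rep : ℕ → List ℕ) (hrep : ∀ n : ℕ, 0 < n → IsRep a b n (rep n))
    (z : ℕ → ℕ)
    (hz : ∀ n : ℕ, 0 < n → ∀ k : ℕ, 1 ≤ k → k ≤ (rep n).length →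
      z (k + ∑ j ∈ Finset.Ico 1 n, (rep j).length) = (rep n).getD ((rep n).length - k) 0)
    (hS : ∀ r : ℕ, 1 ≤ r → ∀ w : Fin r → ℕ, (∀ i, w i < a) →
      ∃ C : ℝ, ∀ N : ℕ, 3 ≤ N →
        |((∑ n ∈ Finset.Icc 1 N, ((Finset.range (rep n).length).filter
              (fun k => k + r ≤ (rep n).length ∧
                ∀ i : Fin r, (rep n).getD (k + (i : ℕ)) 0 = w i)).card : ℕ) : ℝ) -
            (N : ℝ) / (a : ℝ) ^ r * Real.logb ((a : ℝ) / b) N| ≤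
          C * N * Real.log (Real.log N)) :
    ∀ r : ℕ, 1 ≤ r → ∀ w : Fin r → ℕ, (∀ i, w i < a) →
      Filter.Tendsto (fun x : ℕ =>
          (((Finset.Icc 1 x).filter
              (fun n => ∀ i : Fin r, z (n + (i : ℕ)) = w i)).card : ℝ) / x)
        Filter.atTop (nhds (1 / (a : ℝ) ^ r)) :=
  champernowne_rational_base_normal_general a b hb hab rep hrep z hz hS
end
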